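/- arXiv:2306.12495 — 7 statements merged into one kernel-verified Lean document; each statement's English description precedes it below -/
import Mathlib

section
/- Let n be a natural number, lo hi : Fin n → ℝ, and let X = {x : Fin n → ℝ | ∀ i, lo i ≤ x i ∧ x i ≤ hi i} be the hyperrectangle with corners lo and hi. Fix an index i : Fin n. Define M : (Fin n → ℝ) × (Fin n → ℝ) → (Fin n → ℝ) × (Fin n → ℝ) by M (x¹, x²) = (Function.update x¹ i (min (x¹ i) (x² i)), Function.update x² i (max (x¹ i) (x² i))). Then the image of X × X under M equals {(a, b) | a ∈ X ∧ b ∈ X ∧ a i ≤ b i}. (This shows the input-generating network of the global monotonicity example generates exactly the intended multi-variable input set.) -/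
/-- The input-generating network of the global monotonicity example generates
exactly the intended multi-variable input set. -/
theorem monotonicity_input_generation (n : ℕ) (lo hi : Fin n → ℝ) (i : Fin n) :
    let X : Set (Fin n → ℝ) := {x | ∀ i, lo i ≤ x i ∧ x i ≤ hi i}
    let M : (Fin n → ℝ) × (Fin n → ℝ) → (Fin n → ℝ) × (Fin n → ℝ) :=
      fun p => (Function.update p.1 i (min (p.1 i) (p.2 i)),
                Function.update p.2 i (max (p.1 i) (p.2 i)))
    M '' (X ×ˢ X) = {p | p.1 ∈ X ∧ p.2 ∈ X ∧ p.1 i ≤ p.2 i} := by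
  intro X M
  ext p
  constructor
  · rintro ⟨⟨x, y⟩, ⟨hx, hy⟩, rfl⟩
    refine ⟨fun j => ?_, fun j => ?_, ?_⟩
    · by_cases h : j = i
      · subst h
        simp only [M, Function.update_self]
        exact ⟨le_min (hx j).1 (hy j).1, min_le_of_left_le (hx j).2⟩
      · simp only [M, Function.update_of_ne h]
        exact hx j
    · by_cases h : j = i
      · subst h
        simp only [M, Function.update_self]
        exact ⟨le_max_of_le_left (hx j).1, max_le (hx j).2 (hy j).2⟩
      · simp only [M, Function.update_of_ne h]
        exact hy j
    · simp only [M, Function.update_self]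
      exact min_le_max
  · rintro ⟨h1, h2, h3⟩
    refine ⟨p, ⟨h1, h2⟩, ?_⟩
    simp only [M, min_eq_left h3, max_eq_right h3, Function.update_eq_self]
end

section
/- Let n, m be natural numbers, lo hi : Fin n → ℝ, and let X = {x : Fin n → ℝ | ∀ i, lo i ≤ x i ∧ x i ≤ hi i} be the hyperrectangle with corners lo and hi. Fix indices i : Fin n and j : Fin m, and let f : (Fin n → ℝ) → (Fin m → ℝ). Then the following are equivalent: (1) for all x¹, x² ∈ X, f (Function.update x¹ i (min (x¹ i) (x² i))) j − f (Function.update x² i (max (x¹ i) (x² i))) j ≥ 0; (2) for all a, b ∈ X with a i ≤ b i, f b j ≤ f a j. (This is the end-to-end correctness of the global monotonicity encoding: the self-composed satisfaction value is nonnegative on all generated input pairs iff output j of f is non-increasing in input i over X.) -/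
/-- End-to-end correctness of the global monotonicity encoding: the
self-composed satisfaction value is nonnegative on all generated input pairs
iff output `j` of `f` is non-increasing in input `i` over `X`. -/
theorem monotonicity_encoding_correct (n m : ℕ) (lo hi : Fin n → ℝ)
    (i : Fin n) (j : Fin m) (f : (Fin n → ℝ) → (Fin m → ℝ)) :
    let X : Set (Fin n → ℝ) := {x | ∀ i, lo i ≤ x i ∧ x i ≤ hi i}
    (∀ x₁ ∈ X, ∀ x₂ ∈ X,
        f (Function.update x₁ i (min (x₁ i) (x₂ i))) j -
          f (Function.update x₂ i (max (x₁ i) (x₂ i))) j ≥ 0) ↔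
      (∀ a ∈ X, ∀ b ∈ X, a i ≤ b i → f b j ≤ f a j) := by
  intro X
  constructor
  · intro h a ha b hb hab
    have := h a ha b hb
    rw [min_eq_left hab, max_eq_right hab, Function.update_eq_self,
      Function.update_eq_self] at this
    linarith
  · intro h x₁ hx₁ x₂ hx₂
    have ha : Function.update x₁ i (min (x₁ i) (x₂ i)) ∈ X := by
      intro k
      rcases eq_or_ne k i with rfl | hk
      · simp only [Function.update_self]
        exact ⟨le_min (hx₁ k).1 (hx₂ k).1, le_trans (min_le_left _ _) (hx₁ k).2⟩
      · rw [Function.update_of_ne hk]; exact hx₁ k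
    have hb : Function.update x₂ i (max (x₁ i) (x₂ i)) ∈ X := by
      intro k
      rcases eq_or_ne k i with rfl | hk
      · simp only [Function.update_self]
        exact ⟨le_trans (hx₁ k).1 (le_max_left _ _), max_le (hx₁ k).2 (hx₂ k).2⟩
      · rw [Function.update_of_ne hk]; exact hx₂ k
    have := h _ ha _ hb (by simp [min_le_iff, le_max_iff])
    linarith
end

section
/- Let n be a natural number, lo hi : Fin n → ℝ, let X = {x : Fin n → ℝ | ∀ i, lo i ≤ x i ∧ x i ≤ hi i} be the hyperrectangle with corners lo and hi, and let δ ≥ 0 be a real number. Define projX : (Fin n → ℝ) → (Fin n → ℝ) by (projX z) i = max (lo i) (min (hi i) (z i)), and define P : (Fin n → ℝ) × (Fin n → ℝ) → (Fin n → ℝ) × (Fin n → ℝ) by P (x, τ) = (x, projX (x + τ)). Then the image under P of the set X × {τ | ∀ i, |τ i| ≤ δ} equals {(x¹, x²) | x¹ ∈ X ∧ x² ∈ X ∧ ∀ i, |x¹ i − x² i| ≤ δ}. (This shows the input-generating network of the global L∞-robustness example generates exactly the set of pairs of points of X at ℓ∞-distance at most δ.) -/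
/-- The input-generating network of the global L∞-robustness example generates
exactly the set of pairs of points of `X` at ℓ∞-distance at most `δ`. -/
theorem robustness_input_generation (n : ℕ) (lo hi : Fin n → ℝ) (δ : ℝ) (hδ : 0 ≤ δ) :
    let X : Set (Fin n → ℝ) := {x | ∀ i, lo i ≤ x i ∧ x i ≤ hi i}
    let projX : (Fin n → ℝ) → (Fin n → ℝ) := fun z i => max (lo i) (min (hi i) (z i))
    let P : (Fin n → ℝ) × (Fin n → ℝ) → (Fin n → ℝ) × (Fin n → ℝ) :=
      fun p => (p.1, projX (p.1 + p.2))
    P '' (X ×ˢ {τ | ∀ i, |τ i| ≤ δ}) =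
      {p | p.1 ∈ X ∧ p.2 ∈ X ∧ ∀ i, |p.1 i - p.2 i| ≤ δ} := by
  intro X projX P
  ext p
  constructor
  · rintro ⟨⟨x, τ⟩, ⟨hx, hτ⟩, rfl⟩
    refine ⟨hx, fun i => ⟨le_max_left _ _,
      max_le ((hx i).1.trans (hx i).2) (min_le_left _ _)⟩, fun i => ?_⟩
    have hxi := hx i
    have hτi := hτ i
    rw [abs_le] at hτi ⊢
    simp only [P, projX, Pi.add_apply]
    rcases le_total (x i + τ i) (lo i) with h | h
    · rw [min_eq_right (h.trans (hxi.1.trans hxi.2)), max_eq_left h]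
      constructor <;> linarith [hxi.1]
    · rw [max_eq_right]
      · rcases le_total (hi i) (x i + τ i) with h2 | h2
        · rw [min_eq_left h2]; constructor <;> linarith [hxi.2]
        · rw [min_eq_right h2]; constructor <;> linarith
      · exact le_min (hxi.1.trans hxi.2) h
  · rintro ⟨h1, h2, h3⟩
    refine ⟨(p.1, p.2 - p.1), ⟨h1, fun i => by
      simp only [Pi.sub_apply, abs_sub_comm]; exact h3 i⟩, ?_⟩
    simp only [P, projX]
    have : (fun i => max (lo i) (min (hi i) ((p.1 + (p.2 - p.1)) i))) = p.2 := by
      funext i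
      simp only [Pi.add_apply, Pi.sub_apply]
      rw [show p.1 i + (p.2 i - p.1 i) = p.2 i by ring,
        min_eq_right (h2 i).2, max_eq_right (h2 i).1]
    rw [this]
end

section
/- Let n, m be natural numbers, lo hi : Fin n → ℝ, let X = {x : Fin n → ℝ | ∀ i, lo i ≤ x i ∧ x i ≤ hi i} be the hyperrectangle with corners lo and hi, let δ ≥ 0 and ε ≥ 0 be real numbers, and let f : (Fin n → ℝ) → (Fin m → ℝ). Define projX : (Fin n → ℝ) → (Fin n → ℝ) by (projX z) i = max (lo i) (min (hi i) (z i)). Then the following are equivalent: (1) for every x ∈ X and every τ : Fin n → ℝ with |τ i| ≤ δ for all i, we have |f x j − f (projX (x + τ)) j| ≤ ε for all j : Fin m; (2) for all x¹, x² ∈ X with |x¹ i − x² i| ≤ δ for all i, we have |f x¹ j − f x² j| ≤ ε for all j : Fin m. (This is the end-to-end correctness of the global L∞-robustness encoding of Katz et al.: the self-composed network's satisfaction condition over the auxiliary input box is equivalent to global δ-ε robustness of f on X.) -/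
lemma clamp_lip (lo hi a b : ℝ) (h1 : lo ≤ a) (h2 : a ≤ hi) :
    |a - max lo (min hi b)| ≤ |a - b| := by
  rcases le_or_gt b lo with h | h
  · rw [min_eq_right (h.trans (h1.trans h2)), max_eq_left h,
      abs_of_nonneg (by linarith), abs_of_nonneg (by linarith)]
    linarith
  rcases le_or_gt hi b with h' | h'
  · rw [min_eq_left h', max_eq_right (h1.trans h2),
      abs_of_nonpos (by linarith), abs_of_nonpos (by linarith)]
    linarith
  · rw [min_eq_right h'.le, max_eq_right h.le]

/-- End-to-end correctness of the global L∞-robustness encoding of Katz et al.: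
the self-composed network's satisfaction condition over the auxiliary input box
is equivalent to global δ-ε robustness of `f` on `X`. -/
theorem robustness_encoding_correct (n m : ℕ) (lo hi : Fin n → ℝ)
    (δ ε : ℝ) (hδ : 0 ≤ δ) (hε : 0 ≤ ε) (f : (Fin n → ℝ) → (Fin m → ℝ)) :
    let X : Set (Fin n → ℝ) := {x | ∀ i, lo i ≤ x i ∧ x i ≤ hi i}
    let projX : (Fin n → ℝ) → (Fin n → ℝ) := fun z i => max (lo i) (min (hi i) (z i))
    (∀ x ∈ X, ∀ τ : Fin n → ℝ, (∀ i, |τ i| ≤ δ) →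
        ∀ j : Fin m, |f x j - f (projX (x + τ)) j| ≤ ε) ↔
      (∀ x₁ ∈ X, ∀ x₂ ∈ X, (∀ i, |x₁ i - x₂ i| ≤ δ) →
        ∀ j : Fin m, |f x₁ j - f x₂ j| ≤ ε) := by
  intro X projX
  constructor
  · intro h x₁ hx₁ x₂ hx₂ hclose j
    have := h x₁ hx₁ (x₂ - x₁) (fun i => by
      rw [Pi.sub_apply, abs_sub_comm]; exact hclose i) j
    have hp : projX (x₁ + (x₂ - x₁)) = x₂ := by
      funext i
      simp only [projX, Pi.add_apply, Pi.sub_apply]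
      have := hx₂ i
      rw [show x₁ i + (x₂ i - x₁ i) = x₂ i by ring,
        min_eq_right this.2, max_eq_right this.1]
    rwa [hp] at this
  · intro h x hx τ hτ j
    have hmem : projX (x + τ) ∈ X := fun i =>
      ⟨le_max_left _ _, max_le ((hx i).1.trans (hx i).2)
        ((min_le_left _ _))⟩
    exact h x hx _ hmem (fun i =>
      (clamp_lip (lo i) (hi i) (x i) (x i + τ i) (hx i).1 (hx i).2).trans
        (by simpa using hτ i)) j
end

section
/- Let m ≥ 1 be a natural number and let y¹, y² : Fin (m+1) → ℝ, where the last index ⊥ = m represents the extra non-robustness class and indices 0,…,m−1 represent the ordinary classes. Define NR(y) to hold iff y ⊥ ≥ y j for every ordinary class index j, and define Same(y¹, y²) to hold iff there exists an ordinary class index j₁ such that for both k ∈ {1,2} and every ordinary class index j₂, yᵏ j₁ ≥ yᵏ j₂. Then NR(y¹) ∨ NR(y²) ∨ Same(y¹, y²) holds if and only if max( min over ordinary j of (y¹ ⊥ − y¹ j), min over ordinary j of (y² ⊥ − y² j), max over ordinary j₁ of min over k ∈ {1,2} and ordinary j₂ of (yᵏ j₁ − yᵏ j₂) ) ≥ 0.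 (This is the correctness of the real-valued satisfaction function for the global robustness notion of Leino et al. with an extra non-robustness class.) -/
/-- Correctness of the real-valued satisfaction function for the global
robustness notion of Leino et al. with an extra non-robustness class `⊥`
(index `m`, i.e. `Fin.last m`); ordinary classes are `j.castSucc` for
`j : Fin m`. -/
theorem leino_robustness_satisfaction (m : ℕ) (hm : 1 ≤ m)
    (y₁ y₂ : Fin (m + 1) → ℝ) :
    let NR : (Fin (m + 1) → ℝ) → Prop :=
      fun y => ∀ j : Fin m, y (Fin.last m) ≥ y j.castSucc
    let Same : Prop :=
      ∃ j₁ : Fin m, ∀ j₂ : Fin m,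
        y₁ j₁.castSucc ≥ y₁ j₂.castSucc ∧ y₂ j₁.castSucc ≥ y₂ j₂.castSucc
    let hne : (Finset.univ : Finset (Fin m)).Nonempty :=
      Finset.univ_nonempty_iff.mpr ⟨⟨0, hm⟩⟩
    (NR y₁ ∨ NR y₂ ∨ Same) ↔
      max
        (max
          (Finset.univ.inf' hne (fun j : Fin m => y₁ (Fin.last m) - y₁ j.castSucc))
          (Finset.univ.inf' hne (fun j : Fin m => y₂ (Fin.last m) - y₂ j.castSucc)))
        (Finset.univ.sup' hne (fun j₁ : Fin m =>
          min
            (Finset.univ.inf' hne (fun j₂ : Fin m => y₁ j₁.castSucc - y₁ j₂.castSucc))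
            (Finset.univ.inf' hne (fun j₂ : Fin m => y₂ j₁.castSucc - y₂ j₂.castSucc))))
        ≥ 0 := by
  intro NR Same hne
  simp only [ge_iff_le, le_max_iff, Finset.le_inf'_iff, Finset.le_sup'_iff,
    le_min_iff, Finset.mem_univ, true_and, sub_nonneg]
  simp only [NR, Same, ge_iff_le, forall_and, true_implies, forall_true_left]
  tauto
end

section
/- Let n ≥ 1 and A ≥ 1 be natural numbers, lo hi : Fin n → ℝ, and let X = {x : Fin n → ℝ | ∀ i, lo i ≤ x i ∧ x i ≤ hi i} be the hyperrectangle with corners lo and hi. Suppose that lo 0 ≤ k ≤ hi 0 for every real value k ∈ {1, 2, …, A} of the sensitive attribute. For k : Fin A define assign k : (Fin n → ℝ) → (Fin n → ℝ) by assign k x = Function.update x 0 (k + 1). Then the image of X under the map x ↦ (fun k => assign k x) : (Fin n → ℝ) → (Fin A → (Fin n → ℝ)) equals the set of tuples t : Fin A → (Fin n → ℝ) such that (i) t k ∈ X for all k, (ii) (t k) 0 = k + 1 for all k, and (iii) (t k) i = (t 0) i for all k and all i ≠ 0. (This shows the input-generating network of the dependency-fairness example generates exactly the set of tuples of similar inputs,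 one for each value of the sensitive attribute.) -/
/-- The input-generating network of the dependency-fairness example generates
exactly the set of tuples of similar inputs, one for each value of the
sensitive attribute (coordinate `0`, taking values `1, …, A`). -/
theorem fairness_input_generation (n A : ℕ) (hn : 1 ≤ n) (hA : 1 ≤ A)
    (lo hi : Fin n → ℝ)
    (hsens : ∀ k : Fin A, lo ⟨0, hn⟩ ≤ (k : ℝ) + 1 ∧ (k : ℝ) + 1 ≤ hi ⟨0, hn⟩) :
    let X : Set (Fin n → ℝ) := {x | ∀ i, lo i ≤ x i ∧ x i ≤ hi i}
    let assign : Fin A → (Fin n → ℝ) → (Fin n → ℝ) :=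
      fun k x => Function.update x ⟨0, hn⟩ ((k : ℝ) + 1)
    (fun x => fun k : Fin A => assign k x) '' X =
      {t : Fin A → (Fin n → ℝ) |
        (∀ k, t k ∈ X) ∧
        (∀ k, t k ⟨0, hn⟩ = (k : ℝ) + 1) ∧
        (∀ k, ∀ i : Fin n, i ≠ ⟨0, hn⟩ → t k i = t ⟨0, hA⟩ i)} := by
  intro X assign
  ext t
  constructor
  · rintro ⟨x, hx, rfl⟩
    refine ⟨fun k i => ?_, fun k => Function.update_self _ _ _, fun k i hi' => ?_⟩
    · by_cases h : i = ⟨0, hn⟩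
      · subst h
        simpa [assign, Function.update_self] using hsens k
      · simpa [assign, Function.update_of_ne h] using hx i
    · simp [assign, Function.update_of_ne hi']
  · rintro ⟨h1, h2, h3⟩
    refine ⟨t ⟨0, hA⟩, h1 _, ?_⟩
    funext k i
    by_cases h : i = ⟨0, hn⟩
    · subst h
      simp [assign, Function.update_self, h2 k]
    · simp [assign, Function.update_of_ne h, h3 k i h]
end

section
/- Let n ≥ 1, m ≥ 1, and A ≥ 1 be natural numbers, lo hi : Fin n → ℝ, let X = {x : Fin n → ℝ | ∀ i, lo i ≤ x i ∧ x i ≤ hi i} be the hyperrectangle with corners lo and hi, and suppose lo 0 ≤ k ≤ hi 0 for every real value k ∈ {1, …, A}. For k : Fin A define assign k x = Function.update x 0 (k + 1), and let f : (Fin n → ℝ) → (Fin m → ℝ) be a classifier. Then the following are equivalent: (1) for every x ∈ X there exists a class index j₁ : Fin m such that for every k : Fin A and every j₂ : Fin m, f (assign k x) j₁ ≥ f (assign k x) j₂; (2) for every tuple t : Fin A → (Fin n → ℝ) with t k ∈ X for all k, (t k) 0 = k + 1 for all k, and (t k) i = (t 0) i for all k and i ≠ 0, there exists j₁ : Fin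 m such that for every k and every j₂, f (t k) j₁ ≥ f (t k) j₂. (This is the end-to-end correctness of the dependency-fairness encoding: verifying the single-input composed condition over X is equivalent to dependency fairness of f over all tuples of similar inputs.) -/
/-- End-to-end correctness of the dependency-fairness encoding: verifying the
single-input composed condition over `X` is equivalent to dependency fairness
of `f` over all tuples of similar inputs. -/
theorem fairness_encoding_correct (n m A : ℕ) (hn : 1 ≤ n) (hm : 1 ≤ m)
    (hA : 1 ≤ A) (lo hi : Fin n → ℝ)
    (hsens : ∀ k : Fin A, lo ⟨0, hn⟩ ≤ (k : ℝ) + 1 ∧ (k : ℝ) + 1 ≤ hi ⟨0, hn⟩)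
    (f : (Fin n → ℝ) → (Fin m → ℝ)) :
    let X : Set (Fin n → ℝ) := {x | ∀ i, lo i ≤ x i ∧ x i ≤ hi i}
    let assign : Fin A → (Fin n → ℝ) → (Fin n → ℝ) :=
      fun k x => Function.update x ⟨0, hn⟩ ((k : ℝ) + 1)
    (∀ x ∈ X, ∃ j₁ : Fin m, ∀ k : Fin A, ∀ j₂ : Fin m,
        f (assign k x) j₁ ≥ f (assign k x) j₂) ↔
      (∀ t : Fin A → (Fin n → ℝ),
        (∀ k, t k ∈ X) →
        (∀ k, t k ⟨0, hn⟩ = (k : ℝ) + 1) →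
        (∀ k, ∀ i : Fin n, i ≠ ⟨0, hn⟩ → t k i = t ⟨0, hA⟩ i) →
        ∃ j₁ : Fin m, ∀ k : Fin A, ∀ j₂ : Fin m, f (t k) j₁ ≥ f (t k) j₂) := by
  intro X assign
  constructor
  · intro h t hX h0 hsim
    obtain ⟨j₁, hj⟩ := h (t ⟨0, hA⟩) (hX _)
    refine ⟨j₁, fun k j₂ => ?_⟩
    have : assign k (t ⟨0, hA⟩) = t k := by
      funext i
      by_cases hi : i = ⟨0, hn⟩
      · subst hi
        simp [assign, Function.update_self, h0 k]
      · simp [assign, Function.update_of_ne hi, hsim k i hi]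
    rw [← this]
    exact hj k j₂
  · intro h x hx
    have hX : ∀ k, assign k x ∈ X := by
      intro k i
      by_cases hi : i = ⟨0, hn⟩
      · subst hi
        simpa [assign] using hsens k
      · simpa [assign, Function.update_of_ne hi] using hx i
    have h0 : ∀ k, assign k x ⟨0, hn⟩ = (k : ℝ) + 1 := by
      intro k; simp [assign]
    have hsim : ∀ k, ∀ i : Fin n, i ≠ ⟨0, hn⟩ →
        assign k x i = assign ⟨0, hA⟩ x i := by
      intro k i hi
      simp [assign, Function.update_of_ne hi]
    exact h (fun k => assign k x) hX h0 hsim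
end
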